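/- arXiv:2206.03475 — 3 statements merged into one kernel-verified Lean document; each statement's English description precedes it below -/
import Mathlib

section
/- Let X be a real Banach space and let x₀ ∈ S_X be a Δ-point. Then for every x₀* ∈ S_{X*} and α > 0 with x₀ ∈ S(x₀*, α) there exist a sequence (x_i)_{i≥1} in S(x₀*, α) and a sequence (x_i*)_{i≥1} in S_{X*} such that x_i*(x₀) > 1 − 1/i for every i ∈ ℕ, and, writing x_0 := x₀ and x_0* := x₀*, one has ‖x_i − x_j‖ ≥ 2 − α and ‖x_i* − x_j*‖ ≥ 2 − α for all i, j ∈ ℕ ∪ {0} with i ≠ j. -/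
open Metric Set Filter NNReal

noncomputable section

/-- The topological dual of a seminormed space `E` (the pre-2025 Mathlib `NormedSpace.Dual`,
with the norm topology on `E`). -/
abbrev NormedSpace.Dual (𝕜 : Type*) [NontriviallyNormedField 𝕜] (E : Type*)
    [SeminormedAddCommGroup E] [NormedSpace 𝕜 E] : Type _ := E →L[𝕜] 𝕜

namespace DeltaPaper

/-! ### Generic Banach space notions -/

variable {X : Type*} [NormedAddCommGroup X] [NormedSpace ℝ X]

/-- `x` is a Daugavet-point: every slice of the unit ball contains, for every `ε > 0`,
an element at distance at least `2 - ε` from `x`. -/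
def IsDaugavetPoint (x : X) : Prop :=
  ∀ (φ : NormedSpace.Dual ℝ X) (α : ℝ), ‖φ‖ = 1 → 0 < α → ∀ ε > 0,
    ∃ y : X, ‖y‖ ≤ 1 ∧ 1 - α < φ y ∧ 2 - ε ≤ ‖x - y‖

/-- `x` is a Δ-point: every slice of the unit ball containing `x` contains, for every
`ε > 0`, an element at distance at least `2 - ε` from `x`. -/
def IsDeltaPoint (x : X) : Prop :=
  ∀ (φ : NormedSpace.Dual ℝ X) (α : ℝ), ‖φ‖ = 1 → 0 < α → 1 - α < φ x → ∀ ε > 0,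
    ∃ y : X, ‖y‖ ≤ 1 ∧ 1 - α < φ y ∧ 2 - ε ≤ ‖x - y‖

/-- `x*` is a w*-Daugavet-point of the dual of `X`. -/
def IsWeakStarDaugavetPoint (f : NormedSpace.Dual ℝ X) : Prop :=
  ∀ (x : X) (α : ℝ), ‖x‖ = 1 → 0 < α → ∀ ε > 0,
    ∃ g : NormedSpace.Dual ℝ X, ‖g‖ ≤ 1 ∧ 1 - α < g x ∧ 2 - ε ≤ ‖f - g‖

/-- `x*` is a w*-Δ-point of the dual of `X`. -/
def IsWeakStarDeltaPoint (f : NormedSpace.Dual ℝ X) : Prop :=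
  ∀ (x : X) (α : ℝ), ‖x‖ = 1 → 0 < α → 1 - α < f x → ∀ ε > 0,
    ∃ g : NormedSpace.Dual ℝ X, ‖g‖ ≤ 1 ∧ 1 - α < g x ∧ 2 - ε ≤ ‖f - g‖

/-- `x` is a denting point of the unit ball: it lies in slices of the unit ball of
arbitrarily small diameter. -/
def IsDentingPoint (x : X) : Prop :=
  ‖x‖ ≤ 1 ∧ ∀ ε > 0, ∃ (φ : NormedSpace.Dual ℝ X) (α : ℝ), ‖φ‖ = 1 ∧ 0 < α ∧
    1 - α < φ x ∧ Metric.diam {y : X | ‖y‖ ≤ 1 ∧ 1 - α < φ y} < ε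

/-- The Kuratowski measure of non-compactness of a set: the infimum of all `ε > 0`
such that the set can be covered by finitely many sets of diameter less than `ε`. -/
def kuratowski {Y : Type*} [PseudoMetricSpace Y] (A : Set Y) : ℝ :=
  sInf {ε : ℝ | 0 < ε ∧ ∃ 𝒞 : Finset (Set Y), (A ⊆ ⋃ B ∈ 𝒞, B) ∧ ∀ B ∈ 𝒞, Metric.diam B < ε}

/-! ### The space of Lipschitz functions vanishing at a base point -/

variable {M : Type*} [PseudoMetricSpace M]

/-- The least Lipschitz constant of a function. -/
def lipConst (f : M → ℝ) : ℝ≥0 := sInf {K | LipschitzWith K f}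

theorem lipschitzWith_lipConst {f : M → ℝ} (hf : ∃ K, LipschitzWith K f) :
    LipschitzWith (lipConst f) f := by
  obtain ⟨K₀, hK₀⟩ := hf
  rw [lipschitzWith_iff_dist_le_mul]
  intro x y
  rcases le_or_gt (dist x y) 0 with h | h
  · have h0 : dist x y = 0 := le_antisymm h dist_nonneg
    have := hK₀.dist_le_mul x y
    rw [h0, mul_zero] at this ⊢
    exact this
  · rw [← div_le_iff₀ h]
    have hnn : 0 ≤ dist (f x) (f y) / dist x y := by positivity
    rw [← Real.coe_toNNReal _ hnn, NNReal.coe_le_coe]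
    refine le_csInf ⟨K₀, hK₀⟩ ?_
    intro K hK
    rw [← NNReal.coe_le_coe, Real.coe_toNNReal _ hnn, div_le_iff₀ h]
    exact hK.dist_le_mul x y

theorem lipConst_le {f : M → ℝ} {K : ℝ≥0} (hK : LipschitzWith K f) : lipConst f ≤ K :=
  csInf_le (OrderBot.bddBelow _) hK

theorem lipschitzWith_smul {f : M → ℝ} {K : ℝ≥0} (hK : LipschitzWith K f) (c : ℝ) :
    LipschitzWith (‖c‖₊ * K) (c • f) := by
  rw [lipschitzWith_iff_dist_le_mul] at *
  intro x y
  have : dist ((c • f) x) ((c • f) y) = ‖c‖ * dist (f x) (f y) := by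
    simp only [Pi.smul_apply, smul_eq_mul, Real.dist_eq, ← mul_sub, abs_mul, Real.norm_eq_abs]
  rw [this, NNReal.coe_mul, coe_nnnorm, mul_assoc]
  exact mul_le_mul_of_nonneg_left (hK x y) (norm_nonneg c)

variable (M) in
/-- The submodule of `M → ℝ` consisting of Lipschitz functions vanishing at the
base point `z`. -/
def Lip0 (z : M) : Submodule ℝ (M → ℝ) where
  carrier := {f | (∃ K, LipschitzWith K f) ∧ f z = 0}
  add_mem' := by
    rintro f g ⟨⟨K, hK⟩, hf0⟩ ⟨⟨L, hL⟩, hg0⟩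
    exact ⟨⟨K + L, hK.add hL⟩, by simp [hf0, hg0]⟩
  zero_mem' := ⟨⟨0, LipschitzWith.const' 0⟩, rfl⟩
  smul_mem' := by
    rintro c f ⟨⟨K, hK⟩, hf0⟩
    exact ⟨⟨‖c‖₊ * K, lipschitzWith_smul hK c⟩, by simp [hf0]⟩

variable {z : M}

instance : NormedAddCommGroup ↥(Lip0 M z) :=
  AddGroupNorm.toNormedAddCommGroup
    { toFun := fun f => ((lipConst (f : M → ℝ) : ℝ≥0) : ℝ)
      map_zero' := by
        have h0 : lipConst (0 : M → ℝ) = 0 :=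
          le_antisymm (lipConst_le (by simpa using LipschitzWith.const' (0 : ℝ))) bot_le
        show ((lipConst ((0 : ↥(Lip0 M z)) : M → ℝ) : ℝ≥0) : ℝ) = 0
        rw [show ((0 : ↥(Lip0 M z)) : M → ℝ) = 0 from rfl, h0, NNReal.coe_zero]
      add_le' := by
        intro f g
        have hf := lipschitzWith_lipConst f.2.1
        have hg := lipschitzWith_lipConst g.2.1
        have : lipConst ((f + g : ↥(Lip0 M z)) : M → ℝ) ≤
            lipConst (f : M → ℝ) + lipConst (g : M → ℝ) := by
          refine lipConst_le ?_
          have := hf.add hg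
          exact this
        exact_mod_cast this
      neg' := by
        intro f
        show ((lipConst ((-f : ↥(Lip0 M z)) : M → ℝ) : ℝ≥0) : ℝ) = _
        rw [show ((-f : ↥(Lip0 M z)) : M → ℝ) = -(f : M → ℝ) from rfl]
        unfold lipConst
        congr 2
        ext K
        exact ⟨fun hK => by simpa using hK.neg, fun hK => hK.neg⟩
      eq_zero_of_map_eq_zero' := by
        intro f hf
        replace hf : ((lipConst (f : M → ℝ) : ℝ≥0) : ℝ) = 0 := hf
        have h0 : lipConst (f : M → ℝ) = 0 := by exact_mod_cast hf
        have hl : LipschitzWith 0 (f : M → ℝ) := h0 ▸ lipschitzWith_lipConst f.2.1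
        ext x
        have := hl.dist_le_mul x z
        simp only [NNReal.coe_zero, zero_mul] at this
        have hxz : (f : M → ℝ) x = (f : M → ℝ) z :=
          dist_le_zero.mp this
        simpa [f.2.2] using hxz }

theorem Lip0.norm_def (f : ↥(Lip0 M z)) : ‖f‖ = ((lipConst (f : M → ℝ) : ℝ≥0) : ℝ) := rfl

theorem Lip0.lipschitzWith (f : ↥(Lip0 M z)) : LipschitzWith (lipConst (f : M → ℝ)) (f : M → ℝ) :=
  lipschitzWith_lipConst f.2.1

instance : NormedSpace ℝ ↥(Lip0 M z) where
  norm_smul_le c f := by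
    have : lipConst ((c • f : ↥(Lip0 M z)) : M → ℝ) ≤ ‖c‖₊ * lipConst (f : M → ℝ) :=
      lipConst_le (lipschitzWith_smul (Lip0.lipschitzWith f) c)
    calc ‖c • f‖ = ((lipConst ((c • f : ↥(Lip0 M z)) : M → ℝ) : ℝ≥0) : ℝ) := rfl
      _ ≤ ((‖c‖₊ * lipConst (f : M → ℝ) : ℝ≥0) : ℝ) := by exact_mod_cast this
      _ = ‖c‖ * ‖f‖ := by push_cast [Lip0.norm_def]; rfl

variable (M z) in
/-- The evaluation functional `δ_x ∈ Lip₀(M)*`. -/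
def evalδ (x : M) : NormedSpace.Dual ℝ ↥(Lip0 M z) :=
  LinearMap.mkContinuous
    { toFun := fun f => (f : M → ℝ) x
      map_add' := fun f g => rfl
      map_smul' := fun c f => rfl }
    (dist x z)
    (by
      intro f
      have := (Lip0.lipschitzWith f).dist_le_mul x z
      simp only [f.2.2, Real.dist_eq, sub_zero] at this
      calc ‖(f : M → ℝ) x‖ = |(f : M → ℝ) x - 0| := by simp
        _ ≤ (lipConst (f : M → ℝ) : ℝ) * dist x z := by
            simpa [f.2.2, Real.dist_eq] using (Lip0.lipschitzWith f).dist_le_mul x z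
        _ = dist x z * ‖f‖ := by rw [Lip0.norm_def, mul_comm])

variable (M z) in
/-- The Lipschitz-free space over `M`: the closed linear span of the evaluation
functionals inside `Lip₀(M)*`. -/
def FreeSpace : Submodule ℝ (NormedSpace.Dual ℝ ↥(Lip0 M z)) :=
  (Submodule.span ℝ (Set.range (evalδ M z))).topologicalClosure

variable (M z) in
/-- The molecule `m_{x y} = (δ_x - δ_y)/d(x,y)` as an element of `Lip₀(M)*`. -/
def molecule (x y : M) : NormedSpace.Dual ℝ ↥(Lip0 M z) :=
  (dist x y)⁻¹ • (evalδ M z x - evalδ M z y)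

theorem molecule_mem_freeSpace (x y : M) : molecule M z x y ∈ FreeSpace M z :=
  Submodule.le_topologicalClosure _
    (Submodule.smul_mem _ _ (Submodule.sub_mem _
      (Submodule.subset_span ⟨x, rfl⟩) (Submodule.subset_span ⟨y, rfl⟩)))

variable (M z) in
/-- The molecule `m_{x y}` as an element of the free space `F(M)`. -/
def mol (x y : M) : ↥(FreeSpace M z) := ⟨molecule M z x y, molecule_mem_freeSpace x y⟩

variable (M) in
/-- A metric space is uniformly discrete if distances between distinct points are
bounded below by a positive constant. -/
def UniformlyDiscrete : Prop := ∃ θ > (0:ℝ), ∀ x y : M, x ≠ y → θ ≤ dist x y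

/-- A norm-one Lipschitz function is local if its Lipschitz constant is approximated
on pairs of arbitrarily close points. -/
def IsLocal (f : ↥(Lip0 M z)) : Prop :=
  ∀ ε > 0, ∃ u v : M, u ≠ v ∧
    ‖f‖ - ε < ((f : M → ℝ) u - (f : M → ℝ) v) / dist u v ∧ dist u v < ε

/-- `f ∈ S_{Lip₀(M)}` is a w*-Daugavet-point: for every w*-slice `S(μ, α)` of
`B_{Lip₀(M)}` (`μ` a norm-one element of `F(M)`) and every `ε > 0` there is `g` in the
slice with `‖f - g‖ ≥ 2 - ε`. -/
def IsLipWeakStarDaugavetPoint (f : ↥(Lip0 M z)) : Prop :=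
  ∀ μ : NormedSpace.Dual ℝ ↥(Lip0 M z), μ ∈ FreeSpace M z → ‖μ‖ = 1 → ∀ α > (0:ℝ), ∀ ε > (0:ℝ),
    ∃ g : ↥(Lip0 M z), ‖g‖ ≤ 1 ∧ 1 - α < μ g ∧ 2 - ε ≤ ‖f - g‖

/-- `f ∈ S_{Lip₀(M)}` is a w*-Δ-point: the same as above, but only for w*-slices
containing `f`. -/
def IsLipWeakStarDeltaPoint (f : ↥(Lip0 M z)) : Prop :=
  ∀ μ : NormedSpace.Dual ℝ ↥(Lip0 M z), μ ∈ FreeSpace M z → ‖μ‖ = 1 → ∀ α > (0:ℝ),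
    1 - α < μ f → ∀ ε > (0:ℝ),
    ∃ g : ↥(Lip0 M z), ‖g‖ ≤ 1 ∧ 1 - α < μ g ∧ 2 - ε ≤ ‖f - g‖

end DeltaPaper

open DeltaPaper NormedSpace

/-!
The points are chosen inductively. Given `(x_j, φ_j)` for `j < n`, apply the Δ-property of `x₀`
to the slice of `Ψ = ∑_{j<n} φ_j` (normalised) through `x₀`: it yields `x_n` in the unit ball
with `Ψ x_n > Ψ x₀ - ε_n` and `‖x₀ - x_n‖ ≥ 2 - ε_n`, and a norming functional `φ_n` of
`x₀ - x_n` then has `φ_n x₀ ≈ 1` and `φ_n x_n ≈ -1`. Since `φ_j x₀ ≥ 1 - ε_j` for `j ≥ 1` while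
each `φ_j ≤ 1` on the ball, `Ψ x_n > Ψ x₀ - ε_n` forces every `φ_k x_n` (`k < n`) above `φ₀ x₀ - ∑ ε_j`. Evaluating
`φ_k - φ_n` and `φ_k` at `x_n` and `x_k` gives both separations once `∑ ε_j` is small.
-/

theorem exists_seq_of_forall_exists_sum_range {β M : Type*} [AddCommMonoid M] (b : β)
    (v : β → M) (P : ℕ → M → β → Prop) (h : ∀ n m, ∃ y, P n m y) :
    ∃ f : ℕ → β, f 0 = b ∧ ∀ n, P (n + 1) (∑ j ∈ Finset.range (n + 1), v (f j)) (f (n + 1)) := by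
  choose next hnext using h
  let state : ℕ → β × M := fun n =>
    Nat.rec (b, v b) (fun n s => (next (n + 1) s.2, s.2 + v (next (n + 1) s.2))) n
  have hsum : ∀ n, (state n).2 = ∑ j ∈ Finset.range (n + 1), v (state j).1 := by
    intro n
    induction n with
    | zero => simp [state]
    | succ n ih => rw [Finset.sum_range_succ, ← ih]
  refine ⟨fun n => (state n).1, rfl, fun n => ?_⟩
  rw [← hsum]
  exact hnext _ _

theorem one_sub_sub_sum_lt_of_sum_sub_lt {ι : Type*} {s : Finset ι} {f g : ι → ℝ} {k : ι}
    {ε : ℝ} (hk : k ∈ s) (hf : ∀ j ∈ s, f j ≤ 1)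
    (h : ∑ j ∈ s, g j - ε < ∑ j ∈ s, f j) : 1 - ε - ∑ j ∈ s, (1 - g j) < f k := by
  classical
  have hf_rest : ∑ j ∈ s.erase k, f j ≤ ∑ j ∈ s.erase k, (1 : ℝ) :=
    Finset.sum_le_sum fun j hj => hf j (Finset.mem_of_mem_erase hj)
  have hsplit_f := Finset.add_sum_erase s f hk
  have hsplit_one := Finset.add_sum_erase s (fun _ => (1 : ℝ)) hk
  rw [Finset.sum_sub_distrib]
  linarith

theorem sum_range_one_sub_le {g ε : ℕ → ℝ} {n : ℕ} (hε : 0 ≤ ε 0)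
    (hg : ∀ j, 0 < j → j < n + 1 → 1 - ε j ≤ g j) :
    ∑ j ∈ Finset.range (n + 1), (1 - g j) ≤ 1 - g 0 + ∑ j ∈ Finset.range (n + 1), ε j := by
  rw [Finset.sum_range_succ', Finset.sum_range_succ']
  have : ∑ j ∈ Finset.range n, (1 - g (j + 1)) ≤ ∑ j ∈ Finset.range n, ε (j + 1) :=
    Finset.sum_le_sum fun j hj => by
      linarith [hg (j + 1) j.succ_pos (by simpa using Finset.mem_range.mp hj)]
  linarith

theorem sum_range_div_two_pow_succ_le {c : ℝ} (hc : 0 ≤ c) (n : ℕ) :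
    ∑ j ∈ Finset.range n, c / 2 ^ (j + 1) ≤ c := by
  have h : ∀ j : ℕ, c / 2 ^ (j + 1) = c / 2 * (1 / 2) ^ j := fun j => by
    rw [one_div_pow, pow_succ]; field_simp
  simp only [h, ← Finset.mul_sum]
  nlinarith [sum_geometric_two_le n]

theorem le_norm_sub_of_forall_lt {E : Type*} [SeminormedAddCommGroup E] {v : ℕ → E} {r : ℝ}
    (h : ∀ i j, j < i → r ≤ ‖v i - v j‖) : ∀ i j, i ≠ j → r ≤ ‖v i - v j‖ :=
  have : Std.Symm fun i j => r ≤ ‖v i - v j‖ := ⟨fun i j hij => by rwa [norm_sub_rev]⟩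
  fun _ _ hij => pairwise_iff_gt.2 (fun i j => h i j) hij

section Dual

variable {X : Type*} [NormedAddCommGroup X] [NormedSpace ℝ X]

theorem abs_apply_le_one {g : Dual ℝ X} {v : X} (hg : ‖g‖ ≤ 1) (hv : ‖v‖ ≤ 1) :
    |g v| ≤ 1 := by
  simpa using g.le_of_opNorm_le hg v |>.trans (by simpa using hv)

theorem apply_sub_apply_le_norm_sub {g : Dual ℝ X} (hg : ‖g‖ ≤ 1) (v w : X) :
    g v - g w ≤ ‖v - w‖ := by
  rw [← map_sub]
  exact (Real.le_norm_self _).trans <| (g.le_of_opNorm_le hg _).trans_eq (one_mul _)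

theorem sub_apply_le_norm_sub (f g : Dual ℝ X) {v : X} (hv : ‖v‖ ≤ 1) :
    f v - g v ≤ ‖f - g‖ :=
  (Real.le_norm_self _).trans <| ((f - g).le_opNorm_of_le hv).trans_eq (mul_one _)

theorem exists_dual_of_two_sub_le_norm_sub [Nontrivial X] {x y : X} {ε : ℝ} (hx : ‖x‖ ≤ 1)
    (hy : ‖y‖ ≤ 1) (h : 2 - ε ≤ ‖x - y‖) :
    ∃ g : Dual ℝ X, ‖g‖ = 1 ∧ 1 - ε ≤ g x ∧ g y ≤ ε - 1 := by
  obtain ⟨g, hg, hgxy⟩ := exists_dual_vector' ℝ (x - y)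
  have hgx := abs_le.mp (abs_apply_le_one hg.le hx)
  have hgy := abs_le.mp (abs_apply_le_one hg.le hy)
  rw [map_sub, RCLike.ofReal_real_eq_id, id] at hgxy
  exact ⟨g, hg, by linarith, by linarith⟩

namespace DeltaPaper.IsDeltaPoint

variable {x₀ : X}

theorem exists_far (hΔ : IsDeltaPoint x₀) (hx₀ : ‖x₀‖ = 1) (Ψ : Dual ℝ X) {ε : ℝ}
    (hε : 0 < ε) : ∃ y, ‖y‖ ≤ 1 ∧ Ψ x₀ - ε < Ψ y ∧ 2 - ε ≤ ‖x₀ - y‖ := by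
  rcases eq_or_ne Ψ 0 with rfl | hΨ
  · refine ⟨-x₀, by rw [norm_neg, hx₀], by simpa using hε, ?_⟩
    rw [sub_neg_eq_add, ← two_smul ℝ x₀, norm_smul, hx₀]
    norm_num
    exact hε.le
  · have ht : 0 < ‖Ψ‖ := norm_pos_iff.mpr hΨ
    set ψ : Dual ℝ X := ‖Ψ‖⁻¹ • Ψ with hψ_def
    have hψ : ‖ψ‖ = 1 := norm_smul_inv_norm hΨ
    have hψx₀ : ψ x₀ ≤ 1 := (abs_le.mp (abs_apply_le_one hψ.le hx₀.le)).2
    have hεt : 0 < ε / ‖Ψ‖ := div_pos hε ht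
    obtain ⟨y, hy, hψy, hx₀y⟩ :=
      hΔ ψ (1 - ψ x₀ + ε / ‖Ψ‖) hψ (by linarith) (by linarith) ε hε
    refine ⟨y, hy, ?_, hx₀y⟩
    have hψ_apply : ∀ v, ψ v = Ψ v / ‖Ψ‖ := fun v => by simp [hψ_def, div_eq_inv_mul]
    rw [hψ_apply, hψ_apply] at hψy
    have h : (Ψ x₀ - ε) / ‖Ψ‖ < Ψ y / ‖Ψ‖ := by rw [_root_.sub_div]; linarith
    exact (div_lt_div_iff_of_pos_right ht).mp h

theorem exists_far_with_dual (hΔ : IsDeltaPoint x₀) (hx₀ : ‖x₀‖ = 1) (Ψ : Dual ℝ X) {ε : ℝ}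
    (hε : 0 < ε) : ∃ p : X × Dual ℝ X, ‖p.1‖ ≤ 1 ∧ ‖p.2‖ = 1 ∧ 1 - ε ≤ p.2 x₀ ∧
      p.2 p.1 ≤ ε - 1 ∧ Ψ x₀ - ε < Ψ p.1 := by
  have : Nontrivial X := nontrivial_of_ne x₀ 0 (norm_ne_zero_iff.mp (by simp [hx₀]))
  obtain ⟨y, hy, hΨy, hx₀y⟩ := hΔ.exists_far hx₀ Ψ hε
  obtain ⟨g, hg, hgx₀, hgy⟩ := exists_dual_of_two_sub_le_norm_sub hx₀.le hy hx₀y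
  exact ⟨(y, g), hy, hg, hgx₀, hgy, hΨy⟩

theorem exists_seq (hΔ : IsDeltaPoint x₀) (hx₀ : ‖x₀‖ = 1) {φ₀ : Dual ℝ X} (hφ₀ : ‖φ₀‖ ≤ 1)
    {ε : ℕ → ℝ} (hε : ∀ n, 0 < ε n) :
    ∃ (x : ℕ → X) (φ : ℕ → Dual ℝ X), x 0 = x₀ ∧ φ 0 = φ₀ ∧ ∀ n, 0 < n →
      ‖x n‖ ≤ 1 ∧ ‖φ n‖ = 1 ∧ 1 - ε n ≤ φ n x₀ ∧ φ n (x n) ≤ ε n - 1 ∧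
      ∀ k < n, φ₀ x₀ - ∑ j ∈ Finset.range (n + 1), ε j < φ k (x n) := by
  obtain ⟨F, hF0, hF⟩ := exists_seq_of_forall_exists_sum_range (x₀, φ₀) Prod.snd
    (fun n Ψ p => ‖p.1‖ ≤ 1 ∧ ‖p.2‖ = 1 ∧ 1 - ε n ≤ p.2 x₀ ∧ p.2 p.1 ≤ ε n - 1 ∧
      Ψ x₀ - ε n < Ψ p.1)
    (fun n Ψ => hΔ.exists_far_with_dual hx₀ Ψ (hε n))
  have hnorm : ∀ j, ‖(F j).2‖ ≤ 1 := by
    rintro (_ | j)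
    · simpa [hF0] using hφ₀
    · exact (hF j).2.1.le
  refine ⟨fun n => (F n).1, fun n => (F n).2, by simp [hF0], by simp [hF0], ?_⟩
  rintro (_ | n) hn
  · exact absurd hn (lt_irrefl 0)
  obtain ⟨hx, hφ, hφx₀, hφx, hΨ⟩ := hF n
  refine ⟨hx, hφ, hφx₀, hφx, fun k hk => ?_⟩
  simp only [FunLike.coe_sum, Finset.sum_apply] at hΨ
  have hfar := one_sub_sub_sum_lt_of_sum_sub_lt (Finset.mem_range.2 hk)
    (fun j _ => (abs_le.mp (abs_apply_le_one (hnorm j) hx)).2) hΨ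
  have hdeficit := sum_range_one_sub_le (g := fun j => (F j).2 x₀) (n := n) (hε 0).le
    (fun j hj _ => by obtain ⟨i, rfl⟩ := Nat.exists_eq_succ_of_ne_zero hj.ne'; exact (hF i).2.2.1)
  rw [Finset.sum_range_succ _ (n + 1)]
  simp only [hF0] at hdeficit ⊢
  linarith

theorem exists_seq_with_margin (hΔ : IsDeltaPoint x₀) (hx₀ : ‖x₀‖ = 1) {φ₀ : Dual ℝ X}
    (hφ₀ : ‖φ₀‖ ≤ 1) {δ : ℝ} (hδ : 0 < δ) :
    ∃ (x : ℕ → X) (φ : ℕ → Dual ℝ X), x 0 = x₀ ∧ φ 0 = φ₀ ∧ ∀ n, 0 < n →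
      ‖x n‖ ≤ 1 ∧ ‖φ n‖ = 1 ∧ 1 - 1 / (n : ℝ) < φ n x₀ ∧ 1 - δ ≤ φ n x₀ ∧
      φ n (x n) ≤ δ - 1 ∧ ∀ k < n, φ₀ x₀ - δ < φ k (x n) := by
  set c := min δ 1
  have hc : 0 < c := lt_min hδ one_pos
  have hε_le : ∀ n : ℕ, c / 2 ^ (n + 1) ≤ c := fun n =>
    div_le_self hc.le (one_le_pow₀ one_le_two)
  obtain ⟨x, φ, hx0, hφ0, hseq⟩ :=
    hΔ.exists_seq hx₀ hφ₀ (ε := fun n => c / 2 ^ (n + 1)) (fun n => by positivity)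
  refine ⟨x, φ, hx0, hφ0, fun n hn => ?_⟩
  obtain ⟨hx, hφ, hφx₀, hφx, hfar⟩ := hseq n hn
  have hεn : c / 2 ^ (n + 1) < 1 / n := by
    have hn2 : (n : ℝ) < 2 ^ (n + 1) := by
      exact_mod_cast n.lt_two_pow_self.trans (Nat.pow_lt_pow_succ one_lt_two)
    calc c / 2 ^ (n + 1) ≤ 1 / 2 ^ (n + 1) := by gcongr; exact min_le_right δ 1
      _ < 1 / n := one_div_lt_one_div_of_lt (Nat.cast_pos.mpr hn) hn2
  have hcδ : c ≤ δ := min_le_left δ 1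
  refine ⟨hx, hφ, by linarith, by linarith [hε_le n], by linarith [hε_le n], fun k hk => ?_⟩
  linarith [hfar k hk, sum_range_div_two_pow_succ_le hc.le (n + 1)]

end DeltaPaper.IsDeltaPoint

end Dual

theorem statement0_general {X : Type*} [NormedAddCommGroup X] [NormedSpace ℝ X]
    (x₀ : X) (hx₀ : ‖x₀‖ = 1) (hΔ : IsDeltaPoint x₀)
    (φ₀ : Dual ℝ X) (α : ℝ) (hφ₀ : ‖φ₀‖ = 1) (hmem : 1 - α < φ₀ x₀) :
    ∃ (x : ℕ → X) (φ : ℕ → Dual ℝ X),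
      x 0 = x₀ ∧ φ 0 = φ₀ ∧
      (∀ i, 1 ≤ i → ‖x i‖ ≤ 1 ∧ 1 - α < φ₀ (x i)) ∧
      (∀ i, 1 ≤ i → ‖φ i‖ = 1 ∧ 1 - 1 / (i : ℝ) < φ i x₀) ∧
      (∀ i j, i ≠ j → 2 - α ≤ ‖x i - x j‖) ∧
      (∀ i j, i ≠ j → 2 - α ≤ ‖φ i - φ j‖) := by
  -- the margin by which `x₀` lies inside the slice `S(φ₀, α)`
  set δ := α - (1 - φ₀ x₀)
  have hδ : 0 < δ := by linarith
  have hδα : δ ≤ α := by linarith [(abs_le.mp (abs_apply_le_one hφ₀.le hx₀.le)).2]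
  obtain ⟨x, φ, hx0, hφ0, hseq⟩ := hΔ.exists_seq_with_margin hx₀ hφ₀.le (half_pos hδ)
  have hx_sep : ∀ i j, j < i → 2 - α ≤ ‖x i - x j‖ := by
    intro i j hji
    obtain ⟨-, hφi, -, hφix₀, hφixi, hfar⟩ := hseq i (by omega)
    rcases j.eq_zero_or_pos with rfl | hj
    · calc 2 - α ≤ φ i x₀ - φ i (x i) := by linarith
        _ ≤ ‖x₀ - x i‖ := apply_sub_apply_le_norm_sub hφi.le _ _
        _ = ‖x i - x 0‖ := by rw [hx0, norm_sub_rev]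
    · obtain ⟨-, hφj, -, -, hφjxj, -⟩ := hseq j hj
      calc 2 - α ≤ φ j (x i) - φ j (x j) := by linarith [hfar j hji]
        _ ≤ ‖x i - x j‖ := apply_sub_apply_le_norm_sub hφj.le _ _
  have hφ_sep : ∀ i j, j < i → 2 - α ≤ ‖φ i - φ j‖ := by
    intro i j hji
    obtain ⟨hxi, -, -, -, hφixi, hfar⟩ := hseq i (by omega)
    rw [norm_sub_rev]
    linarith [hfar j hji, sub_apply_le_norm_sub (φ j) (φ i) hxi]
  refine ⟨x, φ, hx0, hφ0, fun i hi => ?_, fun i hi => ⟨(hseq i hi).2.1, (hseq i hi).2.2.1⟩,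
    le_norm_sub_of_forall_lt hx_sep, le_norm_sub_of_forall_lt hφ_sep⟩
  obtain ⟨hxi, -, -, -, -, hfar⟩ := hseq i hi
  have hφ₀xi := hfar 0 hi
  rw [hφ0] at hφ₀xi
  exact ⟨hxi, by linarith⟩

/-- Proposition 2.1. If `x₀ ∈ S_X` is a Δ-point, then for every slice
`S(x₀*, α)` of `B_X` containing `x₀` there are sequences `(x_i)_{i ≥ 1}` in `S(x₀*, α)` and
`(x_i*)_{i ≥ 1}` in `S_{X*}` with `x_i*(x₀) > 1 - 1/i`, and, setting `x_0 = x₀`,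
`x_0* = x₀*`, one has `‖x_i - x_j‖ ≥ 2 - α` and `‖x_i* - x_j*‖ ≥ 2 - α` for `i ≠ j`. -/
theorem statement0 {X : Type*} [NormedAddCommGroup X] [NormedSpace ℝ X] [CompleteSpace X]
    (x₀ : X) (hx₀ : ‖x₀‖ = 1) (hΔ : IsDeltaPoint x₀)
    (φ₀ : Dual ℝ X) (α : ℝ) (hφ₀ : ‖φ₀‖ = 1) (hα : 0 < α) (hmem : 1 - α < φ₀ x₀) :
    ∃ (x : ℕ → X) (φ : ℕ → Dual ℝ X),
      x 0 = x₀ ∧ φ 0 = φ₀ ∧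
      (∀ i, 1 ≤ i → ‖x i‖ ≤ 1 ∧ 1 - α < φ₀ (x i)) ∧
      (∀ i, 1 ≤ i → ‖φ i‖ = 1 ∧ 1 - 1 / (i : ℝ) < φ i x₀) ∧
      (∀ i j, i ≠ j → 2 - α ≤ ‖x i - x j‖) ∧
      (∀ i j, i ≠ j → 2 - α ≤ ‖φ i - φ j‖) :=
  statement0_general x₀ hx₀ hΔ φ₀ α hφ₀ hmem
end
end

section
/- Let M be a metric space with base point 0 and let f ∈ S_{Lip_0(M)} be a w*-Δ-point. Then for every ε > 0 there exists a sequence of molecules (m_{u_iv_i})_{i∈ℕ} contained in the slice S(f, ε) = {μ ∈ B_{F(M)} : f(μ) > 1 − ε} such that ‖m_{u_iv_i} − m_{u_jv_j}‖ ≥ 2 − ε for all i, j ∈ ℕ with i ≠ j. -/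
open Metric Set Filter NNReal

noncomputable section

open DeltaPaper NormedSpace

/-!
Averaging finitely many molecules `m₁, …, m_k` from a thin slice around `f` gives a norm-one
element of `F(M)` whose slice contains `f`. The w*-Δ-property yields `g` in that slice with
`‖f - g‖` close to `2`; since every `mᵢ` has norm at most one, each `mᵢ(g)` is close to `1`.
A molecule nearly norming `f - g` is then close to `1` at `f` and close to `-1` at `g`, so it
is at distance almost `2` from every `mᵢ`. The slices must shrink as `k` grows, which a
geometric choice of thicknesses makes possible along the whole induction.
-/

theorem exists_seq_of_forall_exists_next {β : Type*} [Nonempty β] (Q : ℕ → β → Prop)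
    (R : β → β → Prop)
    (h : ∀ n (w : ℕ → β), (∀ i < n, Q i (w i)) → ∃ y, Q n y ∧ ∀ i < n, R (w i) y) :
    ∃ w : ℕ → β, (∀ n, Q n (w n)) ∧ ∀ i j, i < j → R (w i) (w j) := by
  choose! F hF using h
  -- `p n` is the sequence whose first `n` terms are the ones chosen so far
  let p : ℕ → ℕ → β := fun n =>
    Nat.rec (fun _ => Classical.arbitrary β) (fun n pn => Function.update pn n (F n pn)) n
  have p_succ : ∀ n, p (n + 1) = Function.update (p n) n (F n (p n)) := fun _ => rfl
  have p_stable : ∀ n i, i < n → p n i = F i (p i) := by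
    intro n
    induction n with
    | zero => intro i hi; omega
    | succ n ih =>
      intro i hi
      rcases Nat.lt_succ_iff_lt_or_eq.1 hi with hi | rfl
      · rw [p_succ, Function.update_of_ne hi.ne, ih i hi]
      · rw [p_succ, Function.update_self]
  have main : ∀ n, Q n (F n (p n)) ∧ ∀ i < n, R (F i (p i)) (F n (p n)) := by
    intro n
    induction n using Nat.strong_induction_on with
    | _ n ih =>
      have hprev : ∀ i < n, Q i (p n i) := fun i hi => p_stable n i hi ▸ (ih i hi).1
      refine ⟨(hF n (p n) hprev).1, fun i hi => ?_⟩
      simpa only [p_stable n i hi] using (hF n (p n) hprev).2 i hi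
  exact ⟨fun n => F n (p n), fun n => (main n).1, fun i j hij => (main j).2 i hij⟩

namespace DeltaPaper

section Slices

variable {E : Type*} [NormedAddCommGroup E] [NormedSpace ℝ E]

/-- `IsLipWeakStarDeltaPoint f` is definitionally `IsDeltaPointWrt (FreeSpace M z) f`. -/
def IsDeltaPointWrt (V : Submodule ℝ (Dual ℝ E)) (f : E) : Prop :=
  ∀ μ : Dual ℝ E, μ ∈ V → ‖μ‖ = 1 → ∀ α > (0:ℝ), 1 - α < μ f → ∀ ε > (0:ℝ),
    ∃ g : E, ‖g‖ ≤ 1 ∧ 1 - α < μ g ∧ 2 - ε ≤ ‖f - g‖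

structure IsNormingSet (S : Set (Dual ℝ E)) : Prop where
  norm_le_one : ∀ φ ∈ S, ‖φ‖ ≤ 1
  exists_lt_apply : ∀ (x : E) (c : ℝ), 0 ≤ c → c < ‖x‖ → ∃ φ ∈ S, c < φ x

theorem abs_apply_le_one {φ : Dual ℝ E} {x : E} (hφ : ‖φ‖ ≤ 1) (hx : ‖x‖ ≤ 1) : |φ x| ≤ 1 :=
  (φ.unit_le_opNorm x hx).trans hφ

variable {V : Submodule ℝ (Dual ℝ E)} {f : E}

theorem IsDeltaPointWrt.exists_of_norm_le_one (hΔ : IsDeltaPointWrt V f) (hf : ‖f‖ = 1)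
    {ν : Dual ℝ E} (hνV : ν ∈ V) (hν : ‖ν‖ ≤ 1) {α : ℝ} (hα : 0 < α) (hα1 : α < 1)
    (hνf : 1 - α < ν f) {η : ℝ} (hη : 0 < η) :
    ∃ g : E, ‖g‖ ≤ 1 ∧ 1 - 2 * α < ν g ∧ 2 - η ≤ ‖f - g‖ := by
  have hνf_le : ν f ≤ ‖ν‖ := by
    simpa [hf] using (Real.le_norm_self _).trans (ν.le_opNorm f)
  have hν0 : 0 < ‖ν‖ := by linarith
  have hμ : ‖‖ν‖⁻¹ • ν‖ = 1 := by
    rw [norm_smul, norm_inv, norm_norm, inv_mul_cancel₀ hν0.ne']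
  have hμf : 1 - α < (‖ν‖⁻¹ • ν) f := by
    rw [smul_apply, smul_eq_mul, ← div_eq_inv_mul]
    exact hνf.trans_le (le_div_self (by linarith) hν0 hν)
  obtain ⟨g, hg, hμg, hfg⟩ := hΔ _ (V.smul_mem _ hνV) hμ α hα hμf η hη
  rw [smul_apply, smul_eq_mul, ← div_eq_inv_mul, lt_div_iff₀ hν0] at hμg
  -- `ν g > ‖ν‖ (1 - α) ≥ ‖ν‖ - α ≥ ν f - α`
  exact ⟨g, hg, by nlinarith, hfg⟩

theorem IsDeltaPointWrt.exists_far_of_sum_lt (hΔ : IsDeltaPointWrt V f) (hf : ‖f‖ = 1)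
    {ι : Type*} (s : Finset ι) (m : ι → Dual ℝ E) (hmV : ∀ i ∈ s, m i ∈ V)
    (hm : ∀ i ∈ s, ‖m i‖ ≤ 1) {β : ℝ} (hβ : 0 < β) (hβ1 : β ≤ 1)
    (hsum : ∑ i ∈ s, (1 - m i f) < β / 2) {η : ℝ} (hη : 0 < η) :
    ∃ g : E, ‖g‖ ≤ 1 ∧ 2 - η ≤ ‖f - g‖ ∧ ∀ i ∈ s, 1 - β < m i g := by
  rcases s.eq_empty_or_nonempty with rfl | hs
  · refine ⟨-f, by rw [norm_neg, hf], ?_, by simp⟩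
    rw [sub_neg_eq_add, ← two_smul ℝ f, norm_smul, hf, Real.norm_two]
    linarith
  set k : ℝ := (s.card : ℝ)
  have hk1 : 1 ≤ k := by simpa [k] using hs.card_pos
  have hk : 0 < k := by linarith
  set ν : Dual ℝ E := k⁻¹ • ∑ i ∈ s, m i
  have hν_apply : ∀ x, ν x = 1 - k⁻¹ * ∑ i ∈ s, (1 - m i x) := by
    intro x
    simp only [ν, smul_apply, sum_apply, smul_eq_mul, Finset.sum_sub_distrib,
      Finset.sum_const, nsmul_eq_mul, mul_one, mul_sub, inv_mul_cancel₀ hk.ne', k]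
    ring
  have hνV : ν ∈ V := V.smul_mem _ (V.sum_mem hmV)
  have hν : ‖ν‖ ≤ 1 := by
    calc ‖ν‖ ≤ k⁻¹ * ∑ i ∈ s, ‖m i‖ := by
          rw [norm_smul, norm_inv, Real.norm_of_nonneg hk.le]
          exact mul_le_mul_of_nonneg_left (norm_sum_le _ _) (by positivity)
      _ ≤ k⁻¹ * k := by
          gcongr
          simpa using Finset.sum_le_sum hm
      _ = 1 := inv_mul_cancel₀ hk.ne'
  have hα : β / (2 * k) < 1 := by
    rw [div_lt_one (by positivity)]; linarith
  obtain ⟨g, hg, hνg, hfg⟩ := hΔ.exists_of_norm_le_one hf hνV hν (by positivity) hα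
    (by rw [hν_apply, sub_lt_sub_iff_left, inv_mul_lt_iff₀ hk]; field_simp; linarith) hη
  have hsum_g : ∑ i ∈ s, (1 - m i g) < β := by
    rw [hν_apply, sub_lt_sub_iff_left, inv_mul_lt_iff₀ hk] at hνg
    field_simp at hνg
    linarith
  refine ⟨g, hg, hfg, fun i hi => ?_⟩
  have hnonneg : ∀ j ∈ s, 0 ≤ 1 - m j g := fun j hj =>
    sub_nonneg.2 (abs_le.1 (abs_apply_le_one (hm j hj) hg)).2
  linarith [Finset.single_le_sum hnonneg hi]

theorem IsDeltaPointWrt.exists_mem_far_of_sum_lt (hΔ : IsDeltaPointWrt V f) (hf : ‖f‖ = 1)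
    {S : Set (Dual ℝ E)} (hS : IsNormingSet S) (hSV : S ⊆ V) {ε : ℝ} (hε : 0 < ε)
    (hε2 : ε ≤ 2) {γ : ℝ} (hγ : 0 < γ) {ι : Type*} (s : Finset ι) (m : ι → Dual ℝ E)
    (hm : ∀ i ∈ s, m i ∈ S) (hsum : ∑ i ∈ s, (1 - m i f) < ε / 4) :
    ∃ φ ∈ S, 1 - γ < φ f ∧ ∀ i ∈ s, 2 - ε ≤ ‖m i - φ‖ := by
  set η := min (ε / 4) (γ / 2)
  have hη : 0 < η := lt_min (by positivity) (by positivity)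
  have hηε : η ≤ ε / 4 := min_le_left _ _
  obtain ⟨g, hg, hfg, hmg⟩ := hΔ.exists_far_of_sum_lt hf s m (fun i hi => hSV (hm i hi))
    (fun i hi => hS.norm_le_one _ (hm i hi)) (β := ε / 2) (by positivity) (by linarith)
    (by linarith) hη
  obtain ⟨φ, hφS, hφ⟩ := hS.exists_lt_apply (f - g) (2 - 2 * η) (by linarith) (by linarith)
  have hφf := abs_le.1 (abs_apply_le_one (hS.norm_le_one φ hφS) hf.le)
  have hφg := abs_le.1 (abs_apply_le_one (hS.norm_le_one φ hφS) hg)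
  rw [map_sub] at hφ
  refine ⟨φ, hφS, by linarith [min_le_right (ε / 4) (γ / 2)], fun i hi => ?_⟩
  calc 2 - ε ≤ (m i - φ) g := by
        rw [sub_apply]; linarith [hmg i hi]
    _ ≤ ‖m i - φ‖ := (Real.le_norm_self _).trans ((m i - φ).unit_le_opNorm g hg)

theorem IsDeltaPointWrt.exists_seq_separated_of_le_two (hΔ : IsDeltaPointWrt V f)
    (hf : ‖f‖ = 1) {S : Set (Dual ℝ E)} (hS : IsNormingSet S) (hSV : S ⊆ V) {ε : ℝ}
    (hε : 0 < ε) (hε2 : ε ≤ 2) :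
    ∃ w : ℕ → Dual ℝ E, (∀ n, w n ∈ S ∧ 1 - ε < w n f) ∧
      Pairwise fun i j => 2 - ε ≤ ‖w i - w j‖ := by
  obtain ⟨w, hQ, hR⟩ := exists_seq_of_forall_exists_next
    (fun n φ => φ ∈ S ∧ 1 - ε / 16 * (1 / 2) ^ n < φ f) (fun φ ψ => 2 - ε ≤ ‖φ - ψ‖)
    (fun n w hw => by
      have hsum : ∑ i ∈ Finset.range n, (1 - w i f) < ε / 4 :=
        calc ∑ i ∈ Finset.range n, (1 - w i f)
            ≤ ∑ i ∈ Finset.range n, ε / 16 * (1 / 2) ^ i :=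
              Finset.sum_le_sum fun i hi => by linarith [(hw i (Finset.mem_range.1 hi)).2]
          _ = ε / 16 * ∑ i ∈ Finset.range n, (1 / 2 : ℝ) ^ i := (Finset.mul_sum ..).symm
          _ ≤ ε / 16 * 2 := by gcongr; exact sum_geometric_two_le n
          _ < ε / 4 := by linarith
      obtain ⟨φ, hφS, hφf, hφsep⟩ := hΔ.exists_mem_far_of_sum_lt hf hS hSV hε hε2
        (γ := ε / 16 * (1 / 2) ^ n) (by positivity) (Finset.range n) w
        (fun i hi => (hw i (Finset.mem_range.1 hi)).1) hsum
      exact ⟨φ, ⟨hφS, hφf⟩, fun i hi => hφsep i (Finset.mem_range.2 hi)⟩)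
  refine ⟨w, fun n => ⟨(hQ n).1, ?_⟩, fun i j hij => ?_⟩
  · have : (1 / 2 : ℝ) ^ n ≤ 1 := pow_le_one₀ (by norm_num) (by norm_num)
    nlinarith [(hQ n).2]
  · rcases hij.lt_or_gt with h | h
    · exact hR i j h
    · rw [norm_sub_rev]; exact hR j i h

theorem IsDeltaPointWrt.exists_seq_separated (hΔ : IsDeltaPointWrt V f) (hf : ‖f‖ = 1)
    {S : Set (Dual ℝ E)} (hS : IsNormingSet S) (hSV : S ⊆ V) {ε : ℝ} (hε : 0 < ε) :
    ∃ w : ℕ → Dual ℝ E, (∀ n, w n ∈ S ∧ 1 - ε < w n f) ∧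
      Pairwise fun i j => 2 - ε ≤ ‖w i - w j‖ := by
  obtain ⟨w, hw, hsep⟩ := hΔ.exists_seq_separated_of_le_two hf hS hSV
    (lt_min hε two_pos) (min_le_right ε 2)
  have hε' : min ε 2 ≤ ε := min_le_left ε 2
  exact ⟨w, fun n => ⟨(hw n).1, by linarith [(hw n).2]⟩,
    fun i j hij => by linarith [hsep hij]⟩

end Slices

section Molecules

variable {M : Type*} [PseudoMetricSpace M] {z : M}

theorem molecule_apply (x y : M) (F : ↥(Lip0 M z)) :
    molecule M z x y F = (dist x y)⁻¹ * ((F : M → ℝ) x - (F : M → ℝ) y) := rfl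

theorem norm_molecule_le_one (x y : M) : ‖molecule M z x y‖ ≤ 1 := by
  refine ContinuousLinearMap.opNorm_le_bound _ zero_le_one fun F => ?_
  have hF : dist ((F : M → ℝ) x) ((F : M → ℝ) y) ≤ ‖F‖ * dist x y :=
    (Lip0.lipschitzWith F).dist_le_mul x y
  rw [molecule_apply, one_mul, norm_mul, norm_inv, Real.norm_of_nonneg dist_nonneg,
    ← dist_eq_norm, inv_mul_eq_div]
  exact div_le_of_le_mul₀ dist_nonneg (norm_nonneg F) hF

end Molecules

section MetricMolecules

variable {M : Type*} [MetricSpace M] {z : M}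

theorem exists_molecule_lt_apply (F : ↥(Lip0 M z)) {c : ℝ} (hc : 0 ≤ c) (h : c < ‖F‖) :
    ∃ x y : M, x ≠ y ∧ c < molecule M z x y F := by
  by_contra! hle
  have hlip : LipschitzWith c.toNNReal (F : M → ℝ) := by
    refine LipschitzWith.of_dist_le_mul fun x y => ?_
    rcases eq_or_ne x y with rfl | hxy
    · simp
    have hd := dist_pos.2 hxy
    have hxy' := hle x y hxy
    have hyx' := hle y x hxy.symm
    rw [molecule_apply, inv_mul_le_iff₀ hd] at hxy'
    rw [molecule_apply, dist_comm, inv_mul_le_iff₀ hd] at hyx'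
    rw [Real.coe_toNNReal c hc, Real.dist_eq, abs_sub_le_iff]
    constructor <;> linarith
  have : ‖F‖ ≤ c := by
    simpa [Lip0.norm_def, Real.coe_toNNReal c hc] using
      (NNReal.coe_le_coe.2 (lipConst_le hlip))
  linarith

theorem isNormingSet_molecules :
    IsNormingSet {φ | ∃ x y : M, x ≠ y ∧ molecule M z x y = φ} where
  norm_le_one := by
    rintro _ ⟨x, y, -, rfl⟩
    exact norm_molecule_le_one x y
  exists_lt_apply F c hc h := by
    obtain ⟨x, y, hxy, hF⟩ := exists_molecule_lt_apply F hc h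
    exact ⟨_, ⟨x, y, hxy, rfl⟩, hF⟩

end MetricMolecules

end DeltaPaper

/-- Proposition 4.1. If `f ∈ S_{Lip₀(M)}` is a w*-Δ-point, then for every
`ε > 0` the slice `S(f, ε)` of `B_{F(M)}` contains a sequence of molecules that are pairwise
at distance at least `2 - ε` from each other. -/
theorem statement9 {M : Type*} [MetricSpace M] (z : M)
    (f : ↥(Lip0 M z)) (hf : ‖f‖ = 1) (hΔ : IsLipWeakStarDeltaPoint f) :
    ∀ ε > (0:ℝ), ∃ u v : ℕ → M, (∀ i, u i ≠ v i) ∧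
      (∀ i, ‖molecule M z (u i) (v i)‖ ≤ 1 ∧ 1 - ε < molecule M z (u i) (v i) f) ∧
      (∀ i j, i ≠ j →
        2 - ε ≤ ‖molecule M z (u i) (v i) - molecule M z (u j) (v j)‖) := by
  intro ε hε
  obtain ⟨w, hw, hsep⟩ := IsDeltaPointWrt.exists_seq_separated hΔ hf isNormingSet_molecules
    (by rintro _ ⟨x, y, -, rfl⟩; exact molecule_mem_freeSpace x y) hε
  choose u v huv hmol using fun n => (hw n).1
  refine ⟨u, v, huv, fun i => ⟨norm_molecule_le_one _ _, hmol i ▸ (hw i).2⟩, fun i j hij => ?_⟩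
  simpa only [hmol] using hsep hij
end
end

section
/- Let M be a metric space with base point 0 and let ε > 0. Then d(u,x) + d(v,y) ≥ (1 − ε)(d(u,v) + d(x,y)) for all a > 0, all u ∈ B(0, 8a), all v ∈ B(0, 8a) \ B(0, 4a), and all x, y ∈ (M \ B(0, 32a/ε)) ∪ B(0, aε). -/
open Metric Set Filter NNReal

noncomputable section

open Metric

/-! If one of `x, y` is far from the base point `z`, then
`d(u,x) + d(v,y) ≥ d(x,z) + d(y,z) - 16a`, which beats
`d(u,v) + d(x,y) ≤ 16a + d(x,z) + d(y,z)` once the factor `1 - ε` is applied.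
If both are near `z`, then `d(x,y) ≤ 2aε` and `d(u,x) + d(v,y)` dominates both
`d(u,v) - 2aε` and `d(v,y) ≥ 4a - aε`; the convex combination of these two lower bounds
with weights `1 - ε` and `ε` gives the claim. -/

section

variable {M : Type*} [PseudoMetricSpace M] {z u v x y : M} {ε : ℝ}

theorem one_sub_mul_dist_add_dist_le_of_far {R : ℝ} (hu : dist u z ≤ R) (hv : dist v z ≤ R)
    (hε₀ : 0 ≤ ε) (hε₁ : ε ≤ 1) (hfar : 4 * R ≤ ε * (dist x z + dist y z)) :
    (1 - ε) * (dist u v + dist x y) ≤ dist u x + dist v y := by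
  have huv : dist u v ≤ 2 * R := by linarith [dist_triangle_right u v z]
  have hxy : dist x y ≤ dist x z + dist y z := dist_triangle_right x y z
  have hx : dist x z ≤ dist u x + dist u z := by linarith [dist_triangle_left x z u]
  have hy : dist y z ≤ dist v y + dist v z := by linarith [dist_triangle_left y z v]
  have hεR : 0 ≤ ε * R := mul_nonneg hε₀ (dist_nonneg.trans hu)
  calc (1 - ε) * (dist u v + dist x y)
      ≤ (1 - ε) * (2 * R + (dist x z + dist y z)) := by gcongr
    _ ≤ dist u x + dist v y := by linarith

theorem one_sub_mul_dist_add_dist_le_of_near {r δ : ℝ} (hx : dist x z ≤ δ) (hy : dist y z ≤ δ)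
    (hv : r ≤ dist v z) (hε₀ : 0 ≤ ε) (hε₁ : ε ≤ 1) (hδ : 4 * δ ≤ ε * r) :
    (1 - ε) * (dist u v + dist x y) ≤ dist u x + dist v y := by
  have hxy : dist x y ≤ 2 * δ := by linarith [dist_triangle_right x y z]
  have h_diff : dist u v - 2 * δ ≤ dist u x + dist v y := by
    linarith [dist_triangle4 u x y v, dist_comm y v]
  have h_far : r - δ ≤ dist u x + dist v y := by
    linarith [dist_triangle v y z, dist_nonneg (x := u) (y := x)]
  have h_convex : (1 - ε) * (dist u v - 2 * δ) + ε * (r - δ) ≤ dist u x + dist v y := by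
    linarith [mul_le_mul_of_nonneg_left h_diff (sub_nonneg.2 hε₁),
      mul_le_mul_of_nonneg_left h_far hε₀]
  have hεδ : 0 ≤ ε * δ := mul_nonneg hε₀ (dist_nonneg.trans hx)
  calc (1 - ε) * (dist u v + dist x y)
      ≤ (1 - ε) * (dist u v + 2 * δ) := by gcongr
    _ ≤ dist u x + dist v y := by linarith

end

/-- Lemma 4.5. For every `ε > 0` one has
`d(u,x) + d(v,y) ≥ (1-ε)(d(u,v) + d(x,y))` for all `a > 0`, `u ∈ B(0,8a)`,
`v ∈ B(0,8a) \ B(0,4a)` and `x, y ∈ (M \ B(0,32a/ε)) ∪ B(0,aε)`. -/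
theorem statement13 {M : Type*} [MetricSpace M] (z : M) (ε : ℝ) (hε : 0 < ε) :
    ∀ a > (0:ℝ), ∀ u ∈ closedBall z (8 * a),
      ∀ v ∈ closedBall z (8 * a) \ closedBall z (4 * a),
        ∀ x ∈ (closedBall z (32 * a / ε))ᶜ ∪ closedBall z (a * ε),
          ∀ y ∈ (closedBall z (32 * a / ε))ᶜ ∪ closedBall z (a * ε),
            (1 - ε) * (dist u v + dist x y) ≤ dist u x + dist v y := by
  intro a _ u hu v ⟨hv, hv_out⟩ x hx y hy
  rw [mem_closedBall] at hu hv
  rcases le_or_gt 1 ε with hε₁ | hε₁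
  · exact (mul_nonpos_of_nonpos_of_nonneg (by linarith) (by positivity)).trans (by positivity)
  have far_of_not_mem {w : M} (hw : w ∉ closedBall z (32 * a / ε)) : 32 * a < ε * dist w z := by
    rw [mem_closedBall, not_le, div_lt_iff₀ hε] at hw
    linarith
  rcases hx with hx | hx
  · refine one_sub_mul_dist_add_dist_le_of_far hu hv hε.le hε₁.le ?_
    linarith [far_of_not_mem hx, mul_nonneg hε.le (dist_nonneg (x := y) (y := z))]
  rcases hy with hy | hy
  · refine one_sub_mul_dist_add_dist_le_of_far hu hv hε.le hε₁.le ?_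
    linarith [far_of_not_mem hy, mul_nonneg hε.le (dist_nonneg (x := x) (y := z))]
  rw [mem_closedBall, not_le] at hv_out
  exact one_sub_mul_dist_add_dist_le_of_near hx hy hv_out.le hε.le hε₁.le (by linarith)
end
end
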